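/- arXiv:2404.02024 — 3 statements merged into one kernel-verified Lean document; each statement's English description precedes it below -/
import Mathlib

section
/- Suppose P and P' are partitions of a finite set V of sizes s and t respectively, and 0 < ε < 1. Then there is an equipartition Q of V with at most ε⁻¹·s·t parts such that Q ε-approximately refines both P and P'; that is, for every Q₀ ∈ Q there exist P₀ ∈ P and P₀' ∈ P' with |Q₀ \ P₀| ≤ ε|Q₀| and |Q₀ \ P₀'| ≤ ε|Q₀|. -/
/-!
Let `R = {p ∩ p'}` be the common refinement of `P` and `P'`, so `#R ≤ st`, and put
`K = ⌊ε⁻¹st⌋`, `m = ⌊|V| / K⌋`, `d = ⌊εm⌋`. Cut from every part of `R` as many disjoint cores of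
size `c = m + 1 - d` as fit; each part wastes fewer than `c` elements, so there are at least `K`
cores as soon as `c (K + st) ≤ |V|`, which holds for large `|V|` because `εK > st - ε` makes
`(K + st)(1 - ε) < K`. Extending `K` cores to an equipartition of `V` into parts of size `m` or
`m + 1` adds at most `d ≤ εm` elements to each core, so every part lies, up to an `ε`-fraction,
inside a part of `R`, hence inside a part of `P` and a part of `P'`.
-/

open scoped Classical

/-- `P` is a partition of the finite set `V` (into nonempty pairwise disjoint parts). -/
def IsPartitionOf {α : Type*} [DecidableEq α] (P : Finset (Finset α)) (V : Finset α) : Prop :=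
  (∀ p ∈ P, p.Nonempty) ∧ (P : Set (Finset α)).PairwiseDisjoint id ∧ P.biUnion id = V

open Finset Filter

section Partitions

variable {α ι : Type*} [DecidableEq α]

theorem exists_pairwiseDisjoint_subset_card_eq (I : Finset ι) (g : ι → ℕ) {W : Finset α}
    (h : ∑ i ∈ I, g i ≤ #W) :
    ∃ f : ι → Finset α, (I : Set ι).PairwiseDisjoint f ∧ ∀ i ∈ I, f i ⊆ W ∧ #(f i) = g i := by
  induction I using Finset.induction_on generalizing W with
  | empty => exact ⟨fun _ => ∅, by simp, by simp⟩
  | insert a I ha ih =>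
    rw [sum_insert ha] at h
    obtain ⟨A, hAW, hA⟩ := exists_subset_card_eq (show g a ≤ #W by omega)
    obtain ⟨f, hfdisj, hf⟩ := ih (W := W \ A) (by rw [card_sdiff_of_subset hAW]; omega)
    have hfa : ∀ i ∈ I, Function.update f a A i = f i := fun i hi =>
      Function.update_of_ne (ne_of_mem_of_not_mem hi ha) _ _
    refine ⟨Function.update f a A, ?_, ?_⟩
    · rw [coe_insert]
      refine (hfdisj.mono_on fun i hi => (hfa i hi).le).insert fun j hj _ => ?_
      rw [Function.update_self, hfa j hj]
      exact disjoint_sdiff.mono_right (hf j hj).1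
    · intro i hi
      rcases mem_insert.1 hi with rfl | hi
      · simpa using ⟨hAW, hA⟩
      · rw [hfa i hi]
        exact ⟨(hf i hi).1.trans sdiff_subset, (hf i hi).2⟩

theorem exists_pairwiseDisjoint_superset_card_eq {V : Finset α} {J : Finset ι}
    {C : ι → Finset α} (hCdisj : (J : Set ι).PairwiseDisjoint C) (hCV : ∀ i ∈ J, C i ⊆ V)
    {g : ι → ℕ} (hCg : ∀ i ∈ J, #(C i) ≤ g i) (hg : ∑ i ∈ J, g i = #V) :
    ∃ F : ι → Finset α, (J : Set ι).PairwiseDisjoint F ∧ J.biUnion F = V ∧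
      ∀ i ∈ J, C i ⊆ F i ∧ #(F i) = g i := by
  set W := V \ J.biUnion C
  have hW : ∑ i ∈ J, (g i - #(C i)) = #W := by
    rw [card_sdiff_of_subset (biUnion_subset.2 hCV), card_biUnion hCdisj, ← hg,
      ← sum_tsub_distrib _ hCg]
  obtain ⟨D, hDdisj, hD⟩ := exists_pairwiseDisjoint_subset_card_eq J _ hW.le
  have hCD : ∀ i ∈ J, ∀ j ∈ J, Disjoint (C i) (D j) := fun i hi j hj =>
    (disjoint_sdiff.mono_left (subset_biUnion_of_mem C hi)).mono_right (hD j hj).1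
  have hF : ∀ i ∈ J, #(C i ∪ D i) = g i := fun i hi => by
    rw [card_union_of_disjoint (hCD i hi i hi), (hD i hi).2]
    exact Nat.add_sub_of_le (hCg i hi)
  have hFdisj : (J : Set ι).PairwiseDisjoint fun i => C i ∪ D i := fun i hi j hj hij =>
    disjoint_union_left.2 ⟨disjoint_union_right.2 ⟨hCdisj hi hj hij, hCD i hi j hj⟩,
      disjoint_union_right.2 ⟨(hCD j hj i hi).symm, hDdisj hi hj hij⟩⟩
  refine ⟨fun i => C i ∪ D i, hFdisj, ?_, fun i hi => ⟨subset_union_left, hF i hi⟩⟩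
  refine eq_of_subset_of_card_le (biUnion_subset.2 fun i hi => union_subset (hCV i hi)
    ((hD i hi).1.trans sdiff_subset)) ?_
  rw [card_biUnion hFdisj, sum_congr rfl hF, hg]

theorem isPartitionOf_image {V : Finset α} {J : Finset ι} {F : ι → Finset α}
    (hne : ∀ i ∈ J, (F i).Nonempty) (hdisj : (J : Set ι).PairwiseDisjoint F)
    (hV : J.biUnion F = V) : IsPartitionOf (J.image F) V := by
  refine ⟨by simpa using hne, ?_, by rwa [image_biUnion]⟩
  rw [coe_image]
  rintro _ ⟨i, hi, rfl⟩ _ ⟨j, hj, rfl⟩ hij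
  exact hdisj hi hj fun h => hij (congrArg F h)

theorem pairwiseDisjoint_image₂_inter {P P' : Finset (Finset α)}
    (hP : (P : Set (Finset α)).PairwiseDisjoint id)
    (hP' : (P' : Set (Finset α)).PairwiseDisjoint id) :
    (image₂ (· ∩ ·) P P' : Set (Finset α)).PairwiseDisjoint id := by
  simp only [coe_image₂]
  rintro _ ⟨p, hp, p', hp', rfl⟩ _ ⟨q, hq, q', hq', rfl⟩ hne
  by_cases h : p = q
  · subst h
    have hpq' : p' ≠ q' := by rintro rfl; exact hne rfl
    exact (hP' hp' hq' hpq').mono inter_subset_right inter_subset_right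
  · exact (hP hp hq h).mono inter_subset_left inter_subset_left

theorem biUnion_image₂_inter (P P' : Finset (Finset α)) :
    (image₂ (· ∩ ·) P P').biUnion id = P.biUnion id ∩ P'.biUnion id := by
  ext x
  simp only [mem_biUnion, mem_image₂, mem_inter, id]
  constructor
  · rintro ⟨_, ⟨p, hp, p', hp', rfl⟩, hx⟩
    exact ⟨⟨p, hp, (mem_inter.1 hx).1⟩, ⟨p', hp', (mem_inter.1 hx).2⟩⟩
  · rintro ⟨⟨p, hp, hxp⟩, ⟨p', hp', hxp'⟩⟩
    exact ⟨p ∩ p', ⟨p, hp, p', hp', rfl⟩, mem_inter.2 ⟨hxp, hxp'⟩⟩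

theorem le_sum_div_of_mul_add_card_le {s : Finset ι} {f : ι → ℕ} {c K : ℕ} (hc : 0 < c)
    (h : c * (K + #s) ≤ ∑ i ∈ s, f i) : K ≤ ∑ i ∈ s, f i / c := by
  have hf : ∀ i ∈ s, f i ≤ c * (f i / c + 1) := fun i _ =>
    (Nat.lt_mul_div_succ (f i) hc).le
  have : c * (K + #s) ≤ c * (∑ i ∈ s, f i / c + #s) := by
    refine h.trans ((sum_le_sum hf).trans ?_)
    rw [← mul_sum, sum_add_distrib, sum_const, smul_eq_mul, mul_one]
  have := Nat.le_of_mul_le_mul_left this hc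
  omega

theorem exists_pairwiseDisjoint_subsets_of_parts {R : Finset (Finset α)}
    (hR : (R : Set (Finset α)).PairwiseDisjoint id) {c K : ℕ} (hK : K ≤ ∑ u ∈ R, #u / c) :
    ∃ (J : Finset (Σ _ : Finset α, ℕ)) (C : (Σ _ : Finset α, ℕ) → Finset α),
      #J = K ∧ (J : Set (Σ _ : Finset α, ℕ)).PairwiseDisjoint C ∧
        ∀ i ∈ J, i.1 ∈ R ∧ C i ⊆ i.1 ∧ #(C i) = c := by
  have hpieces (u : Finset α) : ∃ f : ℕ → Finset α,
      ((range (#u / c) : Finset ℕ) : Set ℕ).PairwiseDisjoint f ∧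
        ∀ j ∈ range (#u / c), f j ⊆ u ∧ #(f j) = c :=
    exists_pairwiseDisjoint_subset_card_eq _ _ (by simpa using Nat.div_mul_le_self #u c)
  choose f hfdisj hf using hpieces
  set I := R.sigma fun u => range (#u / c)
  obtain ⟨J, hJI, hJ⟩ := exists_subset_card_eq (s := I) (by simpa [I, card_sigma] using hK)
  have hI : ∀ i ∈ I, i.1 ∈ R ∧ i.2 ∈ range (#i.1 / c) := fun i hi => mem_sigma.1 hi
  refine ⟨J, fun i => f i.1 i.2, hJ, ?_, fun i hi => ?_⟩
  · rintro ⟨u, j⟩ hi ⟨v, k⟩ hk hne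
    obtain ⟨hu, hj⟩ := hI _ (hJI hi)
    obtain ⟨hv, hk⟩ := hI _ (hJI hk)
    by_cases huv : u = v
    · subst huv
      exact hfdisj u hj hk fun h => hne (Sigma.ext rfl (heq_of_eq h))
    · exact (hR hu hv huv).mono (hf u j hj).1 (hf v k hk).1
  · obtain ⟨hu, hj⟩ := hI i (hJI hi)
    exact ⟨hu, hf _ _ hj⟩

theorem exists_equipartition_extending {V : Finset α} {J : Finset ι} {C : ι → Finset α}
    (hJ : J.Nonempty) (hJV : #J ≤ #V) (hCdisj : (J : Set ι).PairwiseDisjoint C)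
    (hC : ∀ i ∈ J, C i ⊆ V ∧ #(C i) ≤ #V / #J) :
    ∃ Q : Finset (Finset α), IsPartitionOf Q V ∧ #Q ≤ #J ∧
      ∀ q ∈ Q, (#q = #V / #J ∨ #q = #V / #J + 1) ∧ ∃ i ∈ J, C i ⊆ q := by
  set m := #V / #J
  obtain ⟨B, hBJ, hB⟩ := exists_subset_card_eq (Nat.mod_lt #V hJ.card_pos).le
  set g : ι → ℕ := fun i => m + if i ∈ B then 1 else 0
  have hg : ∑ i ∈ J, g i = #V := by
    rw [sum_add_distrib, sum_const, smul_eq_mul, sum_boole, filter_mem_eq_inter,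
      inter_eq_right.2 hBJ, Nat.cast_id, hB]
    exact Nat.div_add_mod _ _
  obtain ⟨F, hFdisj, hFV, hF⟩ := exists_pairwiseDisjoint_superset_card_eq hCdisj
    (fun i hi => (hC i hi).1) (fun i hi => (hC i hi).2.trans (Nat.le_add_right _ _)) hg
  have hFcard : ∀ i ∈ J, #(F i) = m ∨ #(F i) = m + 1 := fun i hi => by
    rw [(hF i hi).2]
    by_cases h : i ∈ B <;> simp [h]
  have hm : 0 < m := Nat.div_pos hJV hJ.card_pos
  refine ⟨J.image F, isPartitionOf_image (fun i hi => card_pos.1 ?_) hFdisj hFV,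
    card_image_le, ?_⟩
  · rcases hFcard i hi with h | h <;> omega
  · simp only [mem_image, forall_exists_index, and_imp, forall_apply_eq_imp_iff₂]
    exact fun i hi => ⟨hFcard i hi, i, hi, (hF i hi).1⟩

theorem exists_equipartition_near_parts {V : Finset α} {R : Finset (Finset α)}
    (hRdisj : (R : Set (Finset α)).PairwiseDisjoint id) (hRV : R.biUnion id = V) {K d : ℕ}
    (hK : 0 < K) (hd : d ≤ #V / K) (hcard : (#V / K + 1 - d) * (K + #R) ≤ #V) :
    ∃ Q : Finset (Finset α), IsPartitionOf Q V ∧ #Q ≤ K ∧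
      ∀ q ∈ Q, (#q = #V / K ∨ #q = #V / K + 1) ∧ ∃ u ∈ R, #(q \ u) ≤ d := by
  set c := #V / K + 1 - d
  have hc : 0 < c := by omega
  have hsum : ∑ u ∈ R, #u = #V := by rw [← hRV, card_biUnion hRdisj]; rfl
  obtain ⟨J, C, hJ, hCdisj, hC⟩ := exists_pairwiseDisjoint_subsets_of_parts hRdisj
    (le_sum_div_of_mul_add_card_le hc (hcard.trans hsum.ge))
  have hcK : c * K ≤ #V := (Nat.mul_le_mul_left c (Nat.le_add_right K #R)).trans hcard
  obtain ⟨Q, hQ, hQJ, hQsize⟩ := exists_equipartition_extending (V := V) (C := C)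
    (card_pos.1 (hJ ▸ hK)) (hJ ▸ (Nat.le_mul_of_pos_left K hc).trans hcK) hCdisj
    fun i hi => ⟨(hC i hi).2.1.trans (hRV ▸ subset_biUnion_of_mem id (hC i hi).1),
      by rw [hJ, (hC i hi).2.2]; exact (Nat.le_div_iff_mul_le hK).2 hcK⟩
  rw [hJ] at hQJ hQsize
  refine ⟨Q, hQ, hQJ, fun q hq => ?_⟩
  obtain ⟨hq, i, hi, hCq⟩ := hQsize q hq
  refine ⟨hq, i.1, (hC i hi).1, ?_⟩
  calc #(q \ i.1) ≤ #(q \ C i) := card_le_card (sdiff_subset_sdiff subset_rfl (hC i hi).2.1)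
    _ = #q - c := by rw [card_sdiff_of_subset hCq, (hC i hi).2.2]
    _ ≤ d := by omega

end Partitions

theorem eventually_sub_floor_mul_le {ε : ℝ} (hε1 : ε < 1) {K σ : ℕ}
    (hKσ : (σ : ℝ) < ε * (K + 1)) :
    ∀ᶠ m : ℕ in atTop, (m + 1 - ⌊ε * m⌋₊) * (K + σ) ≤ K * m := by
  rcases Nat.eq_zero_or_pos (K + σ) with h0 | hpos
  · simp [h0]
  have hε : 0 < ε := pos_of_mul_pos_left ((Nat.cast_nonneg σ).trans_lt hKσ) (by positivity)
  set δ := ε * K + ε * σ - σ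
  have hδ : 0 < δ := by
    rcases Nat.eq_zero_or_pos σ with hσ | hσ
    · have : (1 : ℝ) ≤ K := by exact_mod_cast (show 1 ≤ K by omega)
      simp only [δ, hσ, Nat.cast_zero]; nlinarith
    · have : (1 : ℝ) ≤ σ := by exact_mod_cast hσ
      nlinarith
  filter_upwards [(tendsto_natCast_atTop_atTop (R := ℝ)).eventually_ge_atTop
    (2 * (K + σ) / δ)] with m hm
  have hfloor : ⌊ε * m⌋₊ ≤ m := Nat.floor_le_of_le (mul_le_of_le_one_left m.cast_nonneg hε1.le)
  have hcore : ((m + 1 - ⌊ε * m⌋₊ : ℕ) : ℝ) ≤ (1 - ε) * m + 2 := by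
    rw [Nat.cast_sub (by omega)]
    push_cast
    linarith [Nat.lt_floor_add_one (ε * m)]
  have key : ((m + 1 - ⌊ε * m⌋₊ : ℕ) : ℝ) * (K + σ) ≤ K * m := calc
    _ ≤ ((1 - ε) * m + 2) * (K + σ) := mul_le_mul_of_nonneg_right hcore (by positivity)
    _ = K * m - (δ * m - 2 * (K + σ)) := by ring
    _ ≤ K * m := by linarith [(div_le_iff₀ hδ).1 hm]
  exact_mod_cast key

/-- given partitions `P, P'` of `V` of sizes `s, t` and `0 < ε < 1`,
if `V` is sufficiently large then there is an equipartition `Q` of `V` with at most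
`ε⁻¹·s·t` parts which `ε`-approximately refines both `P` and `P'`. -/
theorem stmt_5 {α : Type*} [DecidableEq α] (ε : ℝ) (hε : 0 < ε) (hε1 : ε < 1) (s t : ℕ) :
    ∃ N : ℕ, ∀ (V : Finset α) (P P' : Finset (Finset α)),
      N ≤ V.card →
      IsPartitionOf P V → IsPartitionOf P' V → P.card = s → P'.card = t →
      ∃ Q : Finset (Finset α), IsPartitionOf Q V ∧
        (Q.card : ℝ) ≤ ε⁻¹ * (s : ℝ) * (t : ℝ) ∧
        (∀ q₁ ∈ Q, ∀ q₂ ∈ Q, ((q₁.card : ℤ) - (q₂.card : ℤ)).natAbs ≤ 1) ∧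
        ∀ q ∈ Q, (∃ p ∈ P, ((q \ p).card : ℝ) ≤ ε * (q.card : ℝ)) ∧
          (∃ p ∈ P', ((q \ p).card : ℝ) ≤ ε * (q.card : ℝ)) := by
  set K := ⌊ε⁻¹ * (s * t : ℕ)⌋₊
  have hKσ : ((s * t : ℕ) : ℝ) < ε * (K + 1) := (inv_mul_lt_iff₀ hε).1 (Nat.lt_floor_add_one _)
  obtain ⟨M, hM⟩ := eventually_atTop.1 (eventually_sub_floor_mul_le hε1 hKσ)
  refine ⟨K * M + 1, fun V P P' hV hP hP' hs ht => ?_⟩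
  set R := image₂ (· ∩ ·) P P'
  have hRV : R.biUnion id = V := by rw [biUnion_image₂_inter, hP.2.2, hP'.2.2, inter_self]
  have hRσ : #R ≤ s * t := hs ▸ ht ▸ card_image₂_le _ _ _
  have hK : 0 < K := by
    obtain ⟨u, hu, -⟩ :=
      biUnion_nonempty.1 (hRV.symm ▸ card_pos.1 (by omega) : (R.biUnion id).Nonempty)
    have hσ : (1 : ℝ) ≤ (s * t : ℕ) := by exact_mod_cast (card_pos.2 ⟨u, hu⟩).trans_le hRσ
    exact Nat.floor_pos.2 (one_le_mul_of_one_le_of_one_le ((one_le_inv₀ hε).2 hε1.le) hσ)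
  set m := #V / K
  have hmM : M ≤ m := (Nat.le_div_iff_mul_le hK).2 (by rw [mul_comm]; omega)
  have hd : ⌊ε * m⌋₊ ≤ m := Nat.floor_le_of_le (mul_le_of_le_one_left m.cast_nonneg hε1.le)
  obtain ⟨Q, hQ, hQK, hQ'⟩ := exists_equipartition_near_parts
    (pairwiseDisjoint_image₂_inter hP.2.1 hP'.2.1) hRV hK hd
    ((Nat.mul_le_mul_left _ (Nat.add_le_add_left hRσ K)).trans
      ((hM m hmM).trans (Nat.mul_div_le _ _)))
  refine ⟨Q, hQ, ?_, fun q₁ h₁ q₂ h₂ => ?_, fun q hq => ?_⟩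
  · calc (#Q : ℝ) ≤ K := by exact_mod_cast hQK
      _ ≤ ε⁻¹ * (s * t : ℕ) := Nat.floor_le (by positivity)
      _ = ε⁻¹ * s * t := by push_cast; ring
  · rcases (hQ' q₁ h₁).1 with h | h <;> rcases (hQ' q₂ h₂).1 with h' | h' <;> omega
  · obtain ⟨hsize, _, hu, hqu⟩ := hQ' q hq
    obtain ⟨p, hp, p', hp', rfl⟩ := mem_image₂.1 hu
    have hdq : (⌊ε * m⌋₊ : ℝ) ≤ ε * #q := (Nat.floor_le (by positivity)).trans
      (mul_le_mul_of_nonneg_left (by exact_mod_cast (show m ≤ #q by omega)) hε.le)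
    have key (w : Finset α) (hw : p ∩ p' ⊆ w) : (#(q \ w) : ℝ) ≤ ε * #q := le_trans
      (by exact_mod_cast (card_le_card (sdiff_subset_sdiff subset_rfl hw)).trans hqu) hdq
    exact ⟨⟨p, hp, key p inter_subset_left⟩, ⟨p', hp', key p' inter_subset_right⟩⟩
end

section
/- Fix d > 0 and 0 < ε < min{d⁸, 2⁻⁸}. Let G = (U ∪ V ∪ W, E) be a tripartite graph in which each of G[U,V], G[U,W], G[V,W] is ε-regular with density at least d. Let d_{UV}, d_{UW}, d_{VW} be the three densities, and let Y = {uv ∈ E ∩ K₂[U,V] : |N_G(u) ∩ N_G(v) ∩ W| = (1 ± ε^{1/8})·d_{UW}·d_{VW}·|W|}. Then |Y| ≥ (1 − ε^{1/8})·|E ∩ K₂[U,V]|. -/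
open scoped Classical

noncomputable section

variable {α : Type*}

/-- Density of the pair `(X, Y)` in the graph `G`. -/
def gdens (G : SimpleGraph α) (X Y : Finset α) : ℝ :=
  (((X ×ˢ Y).filter fun p => G.Adj p.1 p.2).card : ℝ) / ((X.card : ℝ) * (Y.card : ℝ))

/-- The pair `(X, Y)` is `ε`-regular with respect to `G`. -/
def EpsRegular (G : SimpleGraph α) (X Y : Finset α) (ε : ℝ) : Prop :=
  ∀ X' ⊆ X, ∀ Y' ⊆ Y, ε * (X.card : ℝ) ≤ (X'.card : ℝ) → ε * (Y.card : ℝ) ≤ (Y'.card : ℝ) →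
    |gdens G X' Y' - gdens G X Y| ≤ ε

end

/-!
Call an edge `uv` between `U` and `V` exceptional if `u` has atypical degree into `W`, or `v` has
atypical degree into `N(u) ∩ W`. Regularity of `(U, W)` bounds the first kind of `u` by `2ε|U|`;
for the other `u` we have `|N(u) ∩ W| ≥ (d_UW - ε)|W| ≥ ε|W|`, so regularity of `(V, W)` applies to
`N(u) ∩ W` and bounds the second kind of `v` by `2ε|V|`. A non-exceptional edge has codegree
`(d_VW ± ε)(d_UW ± ε)|W|`, within `3ε|W| ≤ ε^{1/8} d_UW d_VW |W|` of the target, while the at most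
`4ε|U||V| ≤ ε^{1/8} d |U||V| ≤ ε^{1/8} e(U, V)` exceptional edges are an `ε^{1/8}`-fraction.
-/

open Finset

section Counting

variable {β γ : Type*}

lemma card_filter_product_eq_sum (X : Finset β) (Y : Finset γ) (r : β → γ → Prop)
    [∀ x, DecidablePred (r x)] :
    #((X ×ˢ Y).filter fun p => r p.1 p.2) = ∑ x ∈ X, #(Y.filter (r x)) := by
  rw [card_filter, sum_product]
  exact sum_congr rfl fun x _ => (card_filter _ _).symm

lemma card_filter_product_le (U : Finset β) (V : Finset γ) (Q : β → γ → Prop) (p : β → Prop)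
    [∀ u, DecidablePred (Q u)] [DecidablePred p]
    {a b : ℝ} (hb : 0 ≤ b) (hp : (#(U.filter p) : ℝ) ≤ a * #U)
    (hQ : ∀ u ∈ U, ¬ p u → (#(V.filter (Q u)) : ℝ) ≤ b * #V) :
    (#((U ×ˢ V).filter fun q => Q q.1 q.2) : ℝ) ≤ (a + b) * (#U * #V) := by
  rw [card_filter_product_eq_sum, Nat.cast_sum, ← sum_filter_add_sum_filter_not U p]
  have hrow : ∑ u ∈ U.filter p, (#(V.filter (Q u)) : ℝ) ≤ #(U.filter p) * #V := by
    rw [← nsmul_eq_mul]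
    exact sum_le_card_nsmul _ _ _ fun u _ => mod_cast card_filter_le _ _
  have hgood : ∑ u ∈ U.filter (¬ p ·), (#(V.filter (Q u)) : ℝ) ≤ #U * (b * #V) := by
    calc _ ≤ ∑ _u ∈ U.filter (¬ p ·), b * (#V : ℝ) :=
          sum_le_sum fun u hu => hQ u (mem_filter.1 hu).1 (mem_filter.1 hu).2
      _ = #(U.filter (¬ p ·)) * (b * #V) := by rw [sum_const, nsmul_eq_mul]
      _ ≤ #U * (b * #V) := by gcongr; exact filter_subset _ _
  linarith [mul_le_mul_of_nonneg_right hp (Nat.cast_nonneg (α := ℝ) #V)]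

end Counting

section Density

variable {α : Type*} (G : SimpleGraph α)

lemma gdens_le_one (X Y : Finset α) : gdens G X Y ≤ 1 := by
  refine div_le_one_of_le₀ ?_ (by positivity)
  rw [← Nat.cast_mul, ← card_product]
  exact mod_cast card_filter_le _ _

lemma gdens_nonneg (X Y : Finset α) : 0 ≤ gdens G X Y := by
  unfold gdens
  positivity

lemma gdens_mul_le_card (X Y : Finset α) :
    gdens G X Y * (#X * #Y) ≤ #((X ×ˢ Y).filter fun p => G.Adj p.1 p.2) := by
  rcases (show (0 : ℝ) ≤ #X * #Y by positivity).eq_or_lt with h | h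
  · rw [← h, mul_zero]
    positivity
  · rw [gdens, div_mul_cancel₀ _ h.ne']

lemma gdens_eq_sum_div (X Y : Finset α) :
    gdens G X Y = (∑ x ∈ X, (#(Y.filter (G.Adj x)) : ℝ)) / (#X * #Y) := by
  rw [gdens, card_filter_product_eq_sum (r := G.Adj), Nat.cast_sum]

lemma gdens_lt_of_forall_card_lt {B S : Finset α} (hB : B.Nonempty) {c : ℝ}
    (h : ∀ x ∈ B, (#(S.filter (G.Adj x)) : ℝ) < c * #S) : gdens G B S < c := by
  obtain ⟨x, hx⟩ := hB
  have hB : (0 : ℝ) < #B := mod_cast card_pos.2 ⟨x, hx⟩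
  have hS : (0 : ℝ) < #S := by
    rw [Nat.cast_pos, card_pos, nonempty_iff_ne_empty]
    rintro rfl
    simpa using h x hx
  rw [gdens_eq_sum_div, div_lt_iff₀ (by positivity)]
  calc ∑ x ∈ B, (#(S.filter (G.Adj x)) : ℝ) < ∑ _x ∈ B, c * #S := sum_lt_sum_of_nonempty ⟨x, hx⟩ h
    _ = c * (#B * #S) := by rw [sum_const, nsmul_eq_mul]; ring

lemma lt_gdens_of_forall_lt_card {B S : Finset α} (hB : B.Nonempty) {c : ℝ}
    (h : ∀ x ∈ B, c * #S < #(S.filter (G.Adj x))) : c < gdens G B S := by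
  obtain ⟨x, hx⟩ := hB
  have hB : (0 : ℝ) < #B := mod_cast card_pos.2 ⟨x, hx⟩
  have hS : (0 : ℝ) < #S := by
    rw [Nat.cast_pos, card_pos, nonempty_iff_ne_empty]
    rintro rfl
    simpa using h x hx
  rw [gdens_eq_sum_div, lt_div_iff₀ (by positivity)]
  calc c * (#B * #S) = ∑ _x ∈ B, c * #S := by rw [sum_const, nsmul_eq_mul]; ring
    _ < ∑ x ∈ B, (#(S.filter (G.Adj x)) : ℝ) := sum_lt_sum_of_nonempty ⟨x, hx⟩ h

end Density

lemma abs_sub_mul_mul_le {a b w s c ε : ℝ} (hε : 0 ≤ ε) (hε1 : ε ≤ 1) (hw : 0 ≤ w)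
    (ha : a ≤ 1) (hb : |b| ≤ 1) (hs : |s - a * w| ≤ ε * w) (hc : |c - b * s| ≤ ε * s) :
    |c - a * b * w| ≤ 3 * ε * w := by
  have hs' : s ≤ 2 * w := by nlinarith [(abs_le.1 hs).2]
  calc |c - a * b * w| = |(c - b * s) + b * (s - a * w)| := by ring_nf
    _ ≤ |c - b * s| + |b| * |s - a * w| := by rw [← abs_mul]; exact abs_add_le _ _
    _ ≤ ε * s + 1 * (ε * w) := by gcongr
    _ ≤ 3 * ε * w := by nlinarith

section Regularity

variable {α : Type*} {G : SimpleGraph α} {X Y S : Finset α} {ε : ℝ}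

lemma EpsRegular.card_filter_card_lt_le (hreg : EpsRegular G X Y ε) (hε : 0 ≤ ε) (hSY : S ⊆ Y)
    (hS : ε * #Y ≤ #S) :
    (#(X.filter fun x => (#(S.filter (G.Adj x)) : ℝ) < (gdens G X Y - ε) * #S) : ℝ) ≤
      ε * #X := by
  by_contra! hB
  have hBne : (X.filter fun x => (#(S.filter (G.Adj x)) : ℝ) < (gdens G X Y - ε) * #S).Nonempty :=
    card_pos.1 <| mod_cast (mul_nonneg hε (Nat.cast_nonneg _)).trans_lt hB
  have hlt := gdens_lt_of_forall_card_lt G hBne fun x hx => (mem_filter.1 hx).2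
  linarith [(abs_le.1 (hreg _ (filter_subset _ _) S hSY hB.le hS)).1]

lemma EpsRegular.card_filter_lt_card_le (hreg : EpsRegular G X Y ε) (hε : 0 ≤ ε) (hSY : S ⊆ Y)
    (hS : ε * #Y ≤ #S) :
    (#(X.filter fun x => (gdens G X Y + ε) * #S < #(S.filter (G.Adj x))) : ℝ) ≤ ε * #X := by
  by_contra! hB
  have hBne : (X.filter fun x => (gdens G X Y + ε) * #S < #(S.filter (G.Adj x))).Nonempty :=
    card_pos.1 <| mod_cast (mul_nonneg hε (Nat.cast_nonneg _)).trans_lt hB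
  have hlt := lt_gdens_of_forall_lt_card G hBne fun x hx => (mem_filter.1 hx).2
  linarith [(abs_le.1 (hreg _ (filter_subset _ _) S hSY hB.le hS)).2]

lemma EpsRegular.card_filter_not_abs_le (hreg : EpsRegular G X Y ε) (hε : 0 ≤ ε) (hSY : S ⊆ Y)
    (hS : ε * #Y ≤ #S) :
    (#(X.filter fun x => ¬ |(#(S.filter (G.Adj x)) : ℝ) - gdens G X Y * #S| ≤ ε * #S) : ℝ) ≤
      2 * ε * #X := by
  have hsub : X.filter (fun x => ¬ |(#(S.filter (G.Adj x)) : ℝ) - gdens G X Y * #S| ≤ ε * #S) ⊆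
      X.filter (fun x => (#(S.filter (G.Adj x)) : ℝ) < (gdens G X Y - ε) * #S) ∪
        X.filter (fun x => (gdens G X Y + ε) * #S < #(S.filter (G.Adj x))) := by
    intro x hx
    rw [mem_filter, abs_le, not_and_or, not_le, not_le] at hx
    rw [mem_union, mem_filter, mem_filter]
    exact hx.2.imp (fun h => ⟨hx.1, by linarith⟩) (fun h => ⟨hx.1, by linarith⟩)
  calc _ ≤ (#(X.filter (fun x => (#(S.filter (G.Adj x)) : ℝ) < (gdens G X Y - ε) * #S) ∪
        X.filter (fun x => (gdens G X Y + ε) * #S < #(S.filter (G.Adj x)))) : ℝ) :=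
        mod_cast card_le_card hsub
    _ ≤ _ := mod_cast card_union_le _ _
    _ ≤ ε * #X + ε * #X :=
        add_le_add (hreg.card_filter_card_lt_le hε hSY hS) (hreg.card_filter_lt_card_le hε hSY hS)
    _ = 2 * ε * #X := by ring

end Regularity

section Codegree

variable {α : Type*} (G : SimpleGraph α)

theorem card_filter_adj_not_abs_codegree_le {U V W : Finset α} {ε : ℝ} (hε : 0 ≤ ε)
    (h2ε : 2 * ε ≤ gdens G U W) (hregUW : EpsRegular G U W ε) (hregVW : EpsRegular G V W ε) :
    (#((U ×ˢ V).filter fun p => G.Adj p.1 p.2 ∧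
        ¬ |(#(W.filter fun w => G.Adj p.1 w ∧ G.Adj p.2 w) : ℝ) -
            gdens G U W * gdens G V W * #W| ≤ 3 * ε * #W) : ℝ) ≤
      4 * ε * (#U * #V) := by
  have hUW := gdens_le_one G U W
  have hε1 : ε ≤ 1 := by linarith
  have hVW : |gdens G V W| ≤ 1 := abs_le.2 ⟨by linarith [gdens_nonneg G V W], gdens_le_one G V W⟩
  have hBU : (#(U.filter fun u => ¬ |(#(W.filter (G.Adj u)) : ℝ) - gdens G U W * #W| ≤ ε * #W) : ℝ)
      ≤ 2 * ε * #U := hregUW.card_filter_not_abs_le hε Subset.rfl (by nlinarith)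
  have hfiber : ∀ u ∈ U, ¬ ¬ |(#(W.filter (G.Adj u)) : ℝ) - gdens G U W * #W| ≤ ε * #W →
      (#(V.filter fun v => G.Adj u v ∧ ¬ |(#(W.filter fun w => G.Adj u w ∧ G.Adj v w) : ℝ) -
        gdens G U W * gdens G V W * #W| ≤ 3 * ε * #W) : ℝ) ≤ 2 * ε * #V := by
    intro u _ hu
    rw [not_not] at hu
    have hS : ε * #W ≤ (#(W.filter (G.Adj u)) : ℝ) := by nlinarith [(abs_le.1 hu).1]
    refine le_trans (mod_cast card_le_card (monotone_filter_right _ ?_))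
      (hregVW.card_filter_not_abs_le hε (filter_subset _ _) hS)
    rintro v - ⟨-, hv⟩ hcod
    rw [filter_filter] at hcod
    exact hv (abs_sub_mul_mul_le hε hε1 (Nat.cast_nonneg _) hUW hVW hu hcod)
  calc _ ≤ (2 * ε + 2 * ε) * (#U * #V : ℝ) :=
        card_filter_product_le U V _ _ (by positivity) hBU hfiber
    _ = 4 * ε * (#U * #V) := by ring

theorem one_sub_mul_card_le_card_filter_adj_abs_codegree_le {U V W : Finset α} {ε τ η : ℝ}
    (hε : 0 ≤ ε) (h2ε : 2 * ε ≤ gdens G U W)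
    (hregUW : EpsRegular G U W ε) (hregVW : EpsRegular G V W ε) (hτ : 3 * ε * #W ≤ τ)
    (hη : 4 * ε * (#U * #V) ≤ η * #((U ×ˢ V).filter fun p => G.Adj p.1 p.2)) :
    (1 - η) * #((U ×ˢ V).filter fun p => G.Adj p.1 p.2) ≤
      #((U ×ˢ V).filter fun p => G.Adj p.1 p.2 ∧
        |(#(W.filter fun w => G.Adj p.1 w ∧ G.Adj p.2 w) : ℝ) -
          gdens G U W * gdens G V W * #W| ≤ τ) := by
  have hbad : (#((U ×ˢ V).filter fun p => G.Adj p.1 p.2 ∧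
      ¬ |(#(W.filter fun w => G.Adj p.1 w ∧ G.Adj p.2 w) : ℝ) -
        gdens G U W * gdens G V W * #W| ≤ τ) : ℝ) ≤ 4 * ε * (#U * #V) := by
    refine le_trans (mod_cast card_le_card (monotone_filter_right _ ?_))
      (card_filter_adj_not_abs_codegree_le G hε h2ε hregUW hregVW)
    rintro p - ⟨hadj, hp⟩
    exact ⟨hadj, fun h => hp (h.trans hτ)⟩
  have hsplit := card_filter_add_card_filter_not (s := (U ×ˢ V).filter fun p => G.Adj p.1 p.2)
    fun p => |(#(W.filter fun w => G.Adj p.1 w ∧ G.Adj p.2 w) : ℝ) -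
      gdens G U W * gdens G V W * #W| ≤ τ
  rw [filter_filter, filter_filter] at hsplit
  have hsplit' := congrArg (Nat.cast : ℕ → ℝ) hsplit
  push_cast at hsplit'
  linarith

end Codegree

lemma pow_eight_bounds {e d : ℝ} (he : 0 ≤ e) (hed : e < d) (he2 : e < 1 / 2) :
    2 * e ^ 8 ≤ d ∧ 3 * e ^ 8 ≤ e * d ^ 2 ∧ 4 * e ^ 8 ≤ e * d := by
  have h5 : e ^ 5 ≤ (1 / 2) ^ 5 := pow_le_pow_left₀ he he2.le 5
  have h6 : e ^ 6 ≤ (1 / 2) ^ 6 := pow_le_pow_left₀ he he2.le 6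
  have hsq : e ^ 2 ≤ d ^ 2 := pow_le_pow_left₀ he hed.le 2
  have h7 : 4 * e ^ 7 ≤ d ^ 2 := by nlinarith [pow_nonneg he 2]
  have h7' : 4 * e ^ 7 ≤ d := by nlinarith
  refine ⟨by nlinarith [pow_nonneg he 7], by nlinarith [pow_nonneg he 7], by nlinarith⟩

theorem stmt_7_general {α : Type*} (G : SimpleGraph α) (U V W : Finset α)
    (d ε : ℝ) (hd : 0 < d) (hε : 0 < ε)
    (hεd : ε < min (d ^ 8) (((2 : ℝ) ^ (8 : ℕ))⁻¹))
    (hregUW : EpsRegular G U W ε) (hregVW : EpsRegular G V W ε)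
    (hdUV : d ≤ gdens G U V) (hdUW : d ≤ gdens G U W) (hdVW : d ≤ gdens G V W) :
    (1 - ε ^ ((1 : ℝ) / 8)) * (((U ×ˢ V).filter fun p => G.Adj p.1 p.2).card : ℝ) ≤
      (((U ×ˢ V).filter fun p => G.Adj p.1 p.2 ∧
          |((W.filter fun w => G.Adj p.1 w ∧ G.Adj p.2 w).card : ℝ) -
              gdens G U W * gdens G V W * (W.card : ℝ)| ≤
            ε ^ ((1 : ℝ) / 8) * (gdens G U W * gdens G V W * (W.card : ℝ))).card : ℝ) := by
  obtain ⟨e, he, rfl⟩ : ∃ e : ℝ, 0 < e ∧ e ^ 8 = ε :=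
    ⟨ε ^ ((8 : ℕ)⁻¹ : ℝ), by positivity, Real.rpow_inv_natCast_pow hε.le (by norm_num)⟩
  have hroot : (e ^ 8) ^ ((1 : ℝ) / 8) = e := by
    simpa using Real.pow_rpow_inv_natCast he.le (n := 8) (by norm_num)
  rw [hroot]
  have hed : e < d := lt_of_pow_lt_pow_left₀ 8 hd.le (hεd.trans_le (min_le_left _ _))
  have he2 : e < 1 / 2 :=
    lt_of_pow_lt_pow_left₀ 8 (by norm_num) ((hεd.trans_le (min_le_right _ _)).trans_eq (by norm_num))
  obtain ⟨h2, h3, h4⟩ := pow_eight_bounds he.le hed he2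
  refine one_sub_mul_card_le_card_filter_adj_abs_codegree_le G (by positivity) (h2.trans hdUW)
    hregUW hregVW ?_ ?_
  · have hab : d ^ 2 ≤ gdens G U W * gdens G V W := by
      rw [sq]
      exact mul_le_mul hdUW hdVW hd.le (hd.le.trans hdUW)
    calc 3 * e ^ 8 * #W ≤ e * d ^ 2 * #W := by gcongr
      _ ≤ e * (gdens G U W * gdens G V W) * #W := by gcongr
      _ = _ := by ring
  · calc 4 * e ^ 8 * (#U * #V) ≤ e * d * (#U * #V) := by gcongr
      _ ≤ e * (gdens G U V * (#U * #V)) := by rw [mul_assoc]; gcongr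
      _ ≤ _ := by gcongr; exact gdens_mul_le_card G U V

/-- in a triple of `ε`-regular pairs of density at least `d`
(with `ε < min{d⁸, 2⁻⁸}`), all but an `ε^{1/8}` fraction of the edges between
`U` and `V` lie in `(1 ± ε^{1/8})·d_{UW}·d_{VW}·|W|` triangles. -/
theorem stmt_7 {α : Type*} (G : SimpleGraph α) (U V W : Finset α)
    (hUV : Disjoint U V) (hUW : Disjoint U W) (hVW : Disjoint V W)
    (d ε : ℝ) (hd : 0 < d) (hε : 0 < ε)
    (hεd : ε < min (d ^ 8) (((2 : ℝ) ^ (8 : ℕ))⁻¹))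
    (hregUV : EpsRegular G U V ε) (hregUW : EpsRegular G U W ε) (hregVW : EpsRegular G V W ε)
    (hdUV : d ≤ gdens G U V) (hdUW : d ≤ gdens G U W) (hdVW : d ≤ gdens G V W) :
    (1 - ε ^ ((1 : ℝ) / 8)) * (((U ×ˢ V).filter fun p => G.Adj p.1 p.2).card : ℝ) ≤
      (((U ×ˢ V).filter fun p => G.Adj p.1 p.2 ∧
          |((W.filter fun w => G.Adj p.1 w ∧ G.Adj p.2 w).card : ℝ) -
              gdens G U W * gdens G V W * (W.card : ℝ)| ≤
            ε ^ ((1 : ℝ) / 8) * (gdens G U W * gdens G V W * (W.card : ℝ))).card : ℝ) :=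
  stmt_7_general G U V W d ε hd hε hεd hregUW hregVW hdUV hdUW hdVW
end

section
/- For every ε > 0 and every n ≥ 1, the 3-uniform hypergraph H_ε(n) = n ⊗ Bip(G_ε(n)) has VC₂-dimension at most 1. More generally: for any bipartite graph B = (X ∪ Y, E_B) and any finite set C disjoint from X ∪ Y, the 3-uniform hypergraph H with vertex set X ∪ Y ∪ C and edge set {x y z : xy ∈ E_B, z ∈ C} has VC₂-dimension at most 1. -/
/-!
Every edge of the hypergraph consists of one vertex of `C` and a graph edge whose ends lie
outside `C`, so whichever vertex of an edge lies in `C` determines which pair must be adjacent.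
For a 2×2 configuration, look at which vertex of the edge `a₀ b₀ c` lies in `C`, where `c`
separates `{a₀b₀, a₁b₁}` from `{a₀b₁, a₁b₀}`.  If it is `c`, then `a₀b₀` and `a₁b₁` are graph
edges, so the vertex `c'` realising `a₀b₁` but not `a₀b₀` must lie in `C` and `a₀ b₀ c'` is an
edge after all.  If it is `a₀` (dually `b₀`), then `b₀c` is a graph edge; the edge `a₁ b₁ c`
puts `a₁` or `b₁` into `C`, and either `a₁ b₀ c` becomes an edge or the edge `a₀ b₁ c'` would
need a graph edge at `a₀ ∈ C`.
-/

namespace SimpleGraph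

theorem support_fromRel_subset {α : Type*} [DecidableEq α] {X Y : Finset α}
    {EB : Finset (α × α)} (hEB : EB ⊆ X ×ˢ Y) :
    (fromRel fun s t => (s, t) ∈ EB).support ⊆ ↑(X ∪ Y) := by
  rintro s hs
  obtain ⟨t, hst⟩ := (mem_support _).1 hs
  rcases ((fromRel_adj _ _ _).1 hst).2 with h | h
  · exact Finset.mem_union_left _ (Finset.mem_product.1 (hEB h)).1
  · exact Finset.mem_union_right _ (Finset.mem_product.1 (hEB h)).2

theorem notMem_of_adj {α : Type*} {G : SimpleGraph α} {C : Set α} (hC : Disjoint C G.support)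
    {s t : α} (h : G.Adj s t) : s ∉ C :=
  Set.disjoint_right.1 hC ⟨t, h⟩

variable {α : Type*} [DecidableEq α] (G : SimpleGraph α) (C : Set α)

/-- The edges `{s, t, z}` of the paper's `C ⊗ G`, with `s t` an edge of `G` and `z ∈ C`. -/
def IsTensorEdge (u v w : α) : Prop :=
  ∃ s t z, G.Adj s t ∧ z ∈ C ∧ ({u, v, w} : Finset α) = {s, t, z}

variable {G C} {u v w : α}

theorem isTensorEdge_swap_left : G.IsTensorEdge C v u w ↔ G.IsTensorEdge C u v w := by
  simp only [IsTensorEdge, Finset.insert_comm v u]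

theorem isTensorEdge_swap_right : G.IsTensorEdge C u w v ↔ G.IsTensorEdge C u v w := by
  simp only [IsTensorEdge, Finset.pair_comm w v]

theorem IsTensorEdge.mem_or_mem_or_mem (h : G.IsTensorEdge C u v w) :
    u ∈ C ∨ v ∈ C ∨ w ∈ C := by
  obtain ⟨s, t, z, -, hz, heq⟩ := h
  have hz' : z ∈ ({u, v, w} : Finset α) := heq ▸ by simp
  simp only [Finset.mem_insert, Finset.mem_singleton] at hz'
  rcases hz' with rfl | rfl | rfl <;> simp [hz]

variable (hC : Disjoint C G.support)
include hC

theorem isTensorEdge_iff_adj_of_mem_right (hw : w ∈ C) :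
    G.IsTensorEdge C u v w ↔ G.Adj u v := by
  refine ⟨fun ⟨s, t, z, hst, _, heq⟩ => ?_, fun h => ⟨u, v, w, h, hw, rfl⟩⟩
  have hs : s ∈ ({u, v, w} : Finset α) := heq ▸ by simp
  have ht : t ∈ ({u, v, w} : Finset α) := heq ▸ by simp
  have hsw : s ≠ w := fun e => notMem_of_adj hC hst (e ▸ hw)
  have htw : t ≠ w := fun e => notMem_of_adj hC hst.symm (e ▸ hw)
  simp only [Finset.mem_insert, Finset.mem_singleton] at hs ht
  rcases hs with rfl | rfl | rfl <;> rcases ht with rfl | rfl | rfl <;>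
    first | exact hst | exact hst.symm | exact (G.irrefl hst).elim | contradiction

theorem isTensorEdge_iff_adj_of_mem_left (hu : u ∈ C) :
    G.IsTensorEdge C u v w ↔ G.Adj v w := by
  rw [← isTensorEdge_swap_left, ← isTensorEdge_swap_right,
    isTensorEdge_iff_adj_of_mem_right hC hu]

theorem isTensorEdge_iff_adj_of_mem_middle (hv : v ∈ C) :
    G.IsTensorEdge C u v w ↔ G.Adj u w := by
  rw [← isTensorEdge_swap_right, isTensorEdge_iff_adj_of_mem_right hC hv]

theorem IsTensorEdge.not_shatter {a₀ a₁ b₀ b₁ c c' : α}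
    (h00 : G.IsTensorEdge C a₀ b₀ c) (h11 : G.IsTensorEdge C a₁ b₁ c)
    (h01 : ¬ G.IsTensorEdge C a₀ b₁ c) (h10 : ¬ G.IsTensorEdge C a₁ b₀ c)
    (h01' : G.IsTensorEdge C a₀ b₁ c') (h10' : G.IsTensorEdge C a₁ b₀ c')
    (h00' : ¬ G.IsTensorEdge C a₀ b₀ c') : False := by
  rcases h00.mem_or_mem_or_mem with ha₀ | hb₀ | hc
  · have hb₀c := (isTensorEdge_iff_adj_of_mem_left hC ha₀).1 h00
    rcases h11.mem_or_mem_or_mem with ha₁ | hb₁ | hc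
    · exact h10 ((isTensorEdge_iff_adj_of_mem_left hC ha₁).2 hb₀c)
    · exact notMem_of_adj hC ((isTensorEdge_iff_adj_of_mem_middle hC hb₁).1 h01') ha₀
    · exact notMem_of_adj hC hb₀c.symm hc
  · have ha₀c := (isTensorEdge_iff_adj_of_mem_middle hC hb₀).1 h00
    rcases h11.mem_or_mem_or_mem with ha₁ | hb₁ | hc
    · exact notMem_of_adj hC ((isTensorEdge_iff_adj_of_mem_left hC ha₁).1 h10') hb₀
    · exact h01 ((isTensorEdge_iff_adj_of_mem_middle hC hb₁).2 ha₀c)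
    · exact notMem_of_adj hC ha₀c.symm hc
  · have ha₀b₀ := (isTensorEdge_iff_adj_of_mem_right hC hc).1 h00
    have ha₁b₁ := (isTensorEdge_iff_adj_of_mem_right hC hc).1 h11
    rcases h01'.mem_or_mem_or_mem with ha₀ | hb₁ | hc'
    · exact notMem_of_adj hC ha₀b₀ ha₀
    · exact notMem_of_adj hC ha₁b₁.symm hb₁
    · exact h00' ((isTensorEdge_iff_adj_of_mem_right hC hc').2 ha₀b₀)

end SimpleGraph

open SimpleGraph in
theorem exists_mem_eq_iff_isTensorEdge {α : Type*} [DecidableEq α] {EB : Finset (α × α)}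
    (hEB : ∀ p ∈ EB, p.1 ≠ p.2) (C : Finset α) (u v w : α) :
    (∃ p ∈ EB, ∃ z ∈ C, ({u, v, w} : Finset α) = {p.1, p.2, z}) ↔
      (fromRel fun s t => (s, t) ∈ EB).IsTensorEdge C u v w := by
  constructor
  · rintro ⟨p, hp, z, hz, heq⟩
    exact ⟨p.1, p.2, z, (fromRel_adj _ _ _).2 ⟨hEB p hp, .inl hp⟩, hz, heq⟩
  · rintro ⟨s, t, z, hst, hz, heq⟩
    rcases ((fromRel_adj _ _ _).1 hst).2 with h | h
    · exact ⟨(s, t), h, z, hz, heq⟩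
    · exact ⟨(t, s), h, z, hz, heq.trans (Finset.insert_comm _ _ _)⟩

/-- let `B` be a bipartite graph with parts `X, Y` and edge set
`EB ⊆ X × Y`, and let `C` be a finite set disjoint from `X ∪ Y`.  The 3-uniform
hypergraph on `X ∪ Y ∪ C` whose edges are the sets `{x, y, z}` with `(x, y) ∈ EB`
and `z ∈ C` has VC₂-dimension at most 1: there is no configuration
`a₁, a₂, b₁, b₂` together with vertices `c_S` (for `S ⊆ [2]²`) such that
`{aᵢ, bⱼ, c_S}` is an edge iff `(i, j) ∈ S`. -/
theorem stmt_9 {α : Type*} [DecidableEq α] (X Y C : Finset α)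
    (hXY : Disjoint X Y) (hC : Disjoint C (X ∪ Y))
    (EB : Finset (α × α)) (hEB : EB ⊆ X ×ˢ Y) :
    ¬ ∃ (a b : Fin 2 → α) (c : Finset (Fin 2 × Fin 2) → α),
      (∀ i, a i ∈ X ∪ Y ∪ C) ∧ (∀ j, b j ∈ X ∪ Y ∪ C) ∧ (∀ S, c S ∈ X ∪ Y ∪ C) ∧
      ∀ (S : Finset (Fin 2 × Fin 2)) (i j : Fin 2),
        (∃ p ∈ EB, ∃ z ∈ C, ({a i, b j, c S} : Finset α) = {p.1, p.2, z}) ↔ (i, j) ∈ S := by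
  rintro ⟨a, b, c, -, -, -, h⟩
  have hmem : ∀ p ∈ EB, p.1 ∈ X ∧ p.2 ∈ Y := fun p hp => Finset.mem_product.1 (hEB hp)
  have hloop : ∀ p ∈ EB, p.1 ≠ p.2 := fun p hp e =>
    Finset.disjoint_left.1 hXY (hmem p hp).1 (e ▸ (hmem p hp).2)
  have hsupp : Disjoint (C : Set α) (SimpleGraph.fromRel fun s t => (s, t) ∈ EB).support :=
    Set.disjoint_of_subset_right (SimpleGraph.support_fromRel_subset hEB) (by exact_mod_cast hC)
  simp only [exists_mem_eq_iff_isTensorEdge hloop] at h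
  exact SimpleGraph.IsTensorEdge.not_shatter hsupp
    ((h {(0, 0), (1, 1)} 0 0).2 (by decide)) ((h {(0, 0), (1, 1)} 1 1).2 (by decide))
    (fun e => absurd ((h {(0, 0), (1, 1)} 0 1).1 e) (by decide))
    (fun e => absurd ((h {(0, 0), (1, 1)} 1 0).1 e) (by decide))
    ((h {(0, 1), (1, 0)} 0 1).2 (by decide)) ((h {(0, 1), (1, 0)} 1 0).2 (by decide))
    (fun e => absurd ((h {(0, 1), (1, 0)} 0 0).1 e) (by decide))
end
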